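/- arXiv:2409.03732 — 3 statements merged into one kernel-verified Lean document; each statement's English description precedes it below -/
import Mathlib

section
/- For every atom S with |S| ≥ 2, the measure μ(S) := Σ_{∅≠T⊆S} (−1)^{|S|−|T|} p(T) log p(T) satisfies (−1)^{|S|} μ(S) ≥ 0; i.e., atoms of even cardinality have nonnegative measure and atoms of odd cardinality have nonpositive measure. -/
open Finset BigOperators

variable {Ω : Type*} [Fintype Ω] [DecidableEq Ω]

/-- Probability of a subset: `p(T) = Σ_{ω∈T} p(ω)`. -/
def pS (p : Ω → ℝ) (T : Finset Ω) : ℝ := ∑ ω ∈ T, p ω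

/-- `p(T) log p(T)` (with `0 log 0 = 0` since `Real.log 0 = 0`). -/
noncomputable def plog (p : Ω → ℝ) (T : Finset Ω) : ℝ := pS p T * Real.log (pS p T)

/-- The interior-loss measure of an atom `S`. -/
noncomputable def mu (p : Ω → ℝ) (S : Finset Ω) : ℝ :=
  ∑ T ∈ S.powerset.filter (· ≠ ∅), (-1 : ℝ) ^ (S.card - T.card) * plog p T

/-- `μ` of a set of atoms, extended additively. -/
noncomputable def muSet (p : Ω → ℝ) (R : Finset (Finset Ω)) : ℝ := ∑ S ∈ R, mu p S

/-- A partition `X` crosses an atom `S` when `S` meets at least two distinct parts. -/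
def crossed (X : Finpartition (univ : Finset Ω)) (S : Finset Ω) : Prop :=
  ∃ P ∈ X.parts, ∃ Q ∈ X.parts, P ≠ Q ∧ (S ∩ P).Nonempty ∧ (S ∩ Q).Nonempty

open scoped Classical in
/-- The content `ΔX`: set of atoms crossed by the partition `X`. -/
noncomputable def content (X : Finpartition (univ : Finset Ω)) : Finset (Finset Ω) :=
  (univ : Finset (Finset Ω)).filter (fun S => 2 ≤ S.card ∧ crossed X S)

/-- Shannon entropy of a partition. -/
noncomputable def Hent (p : Ω → ℝ) (X : Finpartition (univ : Finset Ω)) : ℝ :=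
  - ∑ P ∈ X.parts, pS p P * Real.log (pS p P)

/-- `X` refines `Z`: every part of `X` lies in a part of `Z`. -/
def refines (X Z : Finpartition (univ : Finset Ω)) : Prop :=
  ∀ P ∈ X.parts, ∃ Q ∈ Z.parts, P ⊆ Q


/-!
Up to the sign `(-1)^|S|`, `μ(S)` is the `|S|`-fold finite difference at `0` of `f x = x log x`
with steps `p ω`, `ω ∈ S`. Adding a step to `S` subtracts the difference at `y + p a` from the one
at `y`, so its sign is governed by the monotonicity of the previous difference, whose derivative is
the same difference applied to `f'`. Inductively, the `n`-fold difference has the sign of `f⁽ⁿ⁾`,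
and `(-1)^n f⁽ⁿ⁾ x = (n-2)! / x^(n-1) ≥ 0` for `n ≥ 2`. Differences are taken at base points
`y > 0`, where `f` is smooth, and `y → 0` by continuity.
-/

open Real

section AlternatingDifference

variable {ι : Type*}

noncomputable def altDiff (w : ι → ℝ) (S : Finset ι) (f : ℝ → ℝ) (y : ℝ) : ℝ :=
  ∑ T ∈ S.powerset, (-1 : ℝ) ^ T.card * f (y + ∑ i ∈ T, w i)

lemma altDiff_insert [DecidableEq ι] (w : ι → ℝ) {S : Finset ι} {a : ι} (ha : a ∉ S)
    (f : ℝ → ℝ) (y : ℝ) :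
    altDiff w (insert a S) f y = altDiff w S f y - altDiff w S f (y + w a) := by
  rw [altDiff, sum_powerset_insert ha, altDiff, altDiff, sub_eq_add_neg, ← sum_neg_distrib]
  refine congrArg _ (sum_congr rfl fun T hT => ?_)
  have haT : a ∉ T := fun h => ha (mem_powerset.1 hT h)
  rw [card_insert_of_notMem haT, sum_insert haT, pow_succ, add_assoc]
  ring

lemma altDiff_neg (w : ι → ℝ) (S : Finset ι) (f : ℝ → ℝ) (y : ℝ) :
    altDiff w S (fun x => -f x) y = -altDiff w S f y := by
  simp [altDiff, sum_neg_distrib]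

lemma continuous_altDiff (w : ι → ℝ) (S : Finset ι) {f : ℝ → ℝ} (hf : Continuous f) :
    Continuous (altDiff w S f) := by
  unfold altDiff; fun_prop

lemma hasDerivAt_altDiff {w : ι → ℝ} (hw : ∀ i, 0 ≤ w i) (S : Finset ι) {f f' : ℝ → ℝ}
    (hf : ∀ x, 0 < x → HasDerivAt f (f' x) x) {y : ℝ} (hy : 0 < y) :
    HasDerivAt (altDiff w S f) (altDiff w S f' y) y := by
  unfold altDiff
  refine HasDerivAt.fun_sum fun T _ => ((hf _ ?_).comp_add_const y _).const_mul _
  have := sum_nonneg fun i (_ : i ∈ T) => hw i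
  linarith

theorem altDiff_nonneg_of_hasDerivAt {w : ι → ℝ} (hw : ∀ i, 0 ≤ w i) (S : Finset ι)
    (f : ℕ → ℝ → ℝ) (hf : ∀ n x, 0 < x → HasDerivAt (f n) (f (n + 1) x) x)
    (hS : ∀ x, 0 < x → 0 ≤ (-1 : ℝ) ^ S.card * f S.card x) {y : ℝ} (hy : 0 < y) :
    0 ≤ altDiff w S (f 0) y := by
  classical
  induction S using Finset.induction_on generalizing f y with
  | empty => simpa [altDiff] using hS y hy
  | @insert a S ha ih =>
    have hanti : AntitoneOn (altDiff w S (f 0)) (Set.Ioi 0) := by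
      have hderiv x (hx : 0 < x) := hasDerivAt_altDiff hw S (hf 0) hx
      refine antitoneOn_of_hasDerivWithinAt_nonpos (convex_Ioi 0)
        (fun x hx => (hderiv x hx).continuousAt.continuousWithinAt)
        (fun x hx => (hderiv x (by simpa using hx)).hasDerivWithinAt) fun x hx => ?_
      rw [interior_Ioi] at hx
      -- The derivative is `altDiff w S (f 1)`, and the family `-f (n + 1)` satisfies `hS` for `S`.
      have := ih (fun n x => -f (n + 1) x) (fun n x hx => (hf (n + 1) x hx).neg)
        (fun x hx => by simpa [card_insert_of_notMem ha, pow_succ] using hS x hx) hx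
      rw [altDiff_neg] at this
      linarith
    rw [altDiff_insert w ha]
    have := hanti hy (show 0 < y + w a by linarith [hw a]) (by linarith [hw a])
    linarith

end AlternatingDifference

noncomputable def mulLogDeriv : ℕ → ℝ → ℝ
  | 0 => fun x => x * log x
  | 1 => fun x => log x + 1
  | n + 2 => fun x => (-1) ^ n * n.factorial * x ^ (-(n + 1 : ℤ))

lemma hasDerivAt_mulLogDeriv (n : ℕ) {x : ℝ} (hx : x ≠ 0) :
    HasDerivAt (mulLogDeriv n) (mulLogDeriv (n + 1) x) x := by
  match n with
  | 0 => exact hasDerivAt_mul_log hx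
  | 1 => simpa [mulLogDeriv] using (hasDerivAt_log hx).add_const 1
  | n + 2 =>
    refine ((hasDerivAt_zpow (-(n + 1 : ℤ)) x (Or.inl hx)).const_mul
      ((-1) ^ n * n.factorial : ℝ)).congr_deriv ?_
    simp only [mulLogDeriv, Nat.factorial_succ]
    push_cast
    ring_nf

lemma neg_one_pow_mul_mulLogDeriv_nonneg {n : ℕ} (hn : 2 ≤ n) {x : ℝ} (hx : 0 < x) :
    0 ≤ (-1 : ℝ) ^ n * mulLogDeriv n x := by
  obtain ⟨m, rfl⟩ := Nat.exists_eq_add_of_le' hn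
  have : (-1 : ℝ) ^ (m + 2) * (-1) ^ m = 1 := by
    rw [← pow_add]; exact Even.neg_one_pow ⟨m + 1, by ring⟩
  simp only [mulLogDeriv, ← mul_assoc, this, one_mul]
  positivity

lemma neg_one_pow_card_mul_mu {Ω : Type*} [DecidableEq Ω] (p : Ω → ℝ) (S : Finset Ω) :
    (-1 : ℝ) ^ S.card * mu p S = altDiff p S (fun x => x * log x) 0 := by
  have hplog_empty : ∀ T ∈ S.powerset, (-1 : ℝ) ^ (S.card - T.card) * plog p T ≠ 0 → T ≠ ∅ := by
    rintro T - h rfl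
    simp [plog, pS] at h
  rw [mu, sum_filter_of_ne hplog_empty, mul_sum]
  refine sum_congr rfl fun T hT => ?_
  obtain ⟨k, hk⟩ := Nat.exists_eq_add_of_le (card_le_card (mem_powerset.1 hT))
  rw [hk, Nat.add_sub_cancel_left, pow_add, mul_assoc, ← mul_assoc ((-1 : ℝ) ^ k), ← pow_add,
    Even.neg_one_pow ⟨k, rfl⟩, one_mul, zero_add, plog, pS]

theorem mu_sign_general {Ω : Type*} [DecidableEq Ω] (p : Ω → ℝ)
    (hp : ∀ ω, 0 ≤ p ω) (S : Finset Ω) (hS : 2 ≤ S.card) :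
    0 ≤ (-1 : ℝ) ^ S.card * mu p S := by
  rw [neg_one_pow_card_mul_mu]
  have hpos : ∀ y ∈ Set.Ioi (0 : ℝ), 0 ≤ altDiff p S (fun x => x * log x) y := fun y hy =>
    altDiff_nonneg_of_hasDerivAt hp S mulLogDeriv (fun n _ hx => hasDerivAt_mulLogDeriv n hx.ne')
      (fun _ hx => neg_one_pow_mul_mulLogDeriv_nonneg hS hx) hy
  exact ge_of_tendsto ((continuous_altDiff p S continuous_mul_log).continuousAt.continuousWithinAt)
    (eventually_nhdsWithin_of_forall hpos)

theorem mu_sign {Ω : Type*} [Fintype Ω] [DecidableEq Ω] (p : Ω → ℝ)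
    (hp : ∀ ω, 0 ≤ p ω) (hsum : ∑ ω, p ω = 1)
    (S : Finset Ω) (hS : 2 ≤ S.card) :
    0 ≤ (-1 : ℝ) ^ S.card * mu p S :=
  mu_sign_general p hp S hS
end

section
/- For any subset A ⊆ Ω, the sum of μ(S) over all S ⊆ A with |S| ≥ 2 equals p(A) log p(A) − Σ_{ω∈A} p(ω) log p(ω). -/
open Finset BigOperators

variable {Ω : Type*} [Fintype Ω] [DecidableEq Ω]

/-! `μ` is the Möbius transform of `T ↦ p(T) log p(T)` on the lattice of subsets, so summing it
over all `S ⊆ A` recovers `p(A) log p(A)`; the sets with fewer than two elements contribute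
`μ(∅) = 0` and `μ({ω}) = p(ω) log p(ω)`. -/

namespace Finset

variable {α R : Type*} [DecidableEq α] [CommRing R]

theorem sum_Icc_neg_one_pow_card_sub {s t : Finset α} (hst : s ⊆ t) :
    ∑ u ∈ Icc s t, (-1 : R) ^ (#u - #s) = if s = t then 1 else 0 := by
  have hinj : Set.InjOn (s ∪ ·) ((t \ s).powerset : Set (Finset α)) := by
    intro u hu v hv huv
    simp only [coe_powerset, Set.mem_preimage, Set.mem_powerset_iff, coe_subset] at hu hv
    rw [← union_sdiff_cancel_left (disjoint_of_subset_right hu disjoint_sdiff),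
      ← union_sdiff_cancel_left (disjoint_of_subset_right hv disjoint_sdiff)]
    exact congrArg (· \ s) huv
  have hcard : ∀ u ∈ (t \ s).powerset, #(s ∪ u) - #s = #u := fun u hu => by
    rw [card_union_of_disjoint (disjoint_of_subset_right (mem_powerset.mp hu) disjoint_sdiff)]
    omega
  rw [Icc_eq_image_powerset hst, sum_image hinj, sum_congr rfl fun u hu => by rw [hcard u hu]]
  have halt := congrArg (Int.cast : ℤ → R) (sum_powerset_neg_one_pow_card (x := t \ s))
  push_cast at halt
  rw [halt]
  exact if_congr (sdiff_eq_empty_iff_subset.trans ⟨hst.antisymm, fun h => h ▸ subset_rfl⟩) rfl rfl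

theorem sum_powerset_sum_powerset_neg_one_pow_card_sub_mul (f : Finset α → R) (A : Finset α) :
    ∑ S ∈ A.powerset, ∑ T ∈ S.powerset, (-1 : R) ^ (#S - #T) * f T = f A := by
  rw [sum_comm' (t' := A.powerset) (s' := (Icc · A)) fun S T => by
    simp only [mem_powerset, mem_Icc]
    exact ⟨fun h => ⟨⟨h.2, h.1⟩, h.2.trans h.1⟩, fun h => ⟨h.1.2, h.1.1⟩⟩]
  rw [sum_congr rfl fun T hT => by
    rw [← sum_mul, sum_Icc_neg_one_pow_card_sub (mem_powerset.mp hT), ite_mul, one_mul, zero_mul]]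
  simp

end Finset

section

variable {Ω : Type*} [DecidableEq Ω] (p : Ω → ℝ)

theorem mu_eq_sum_powerset (S : Finset Ω) :
    mu p S = ∑ T ∈ S.powerset, (-1 : ℝ) ^ (#S - #T) * plog p T := by
  refine sum_filter_of_ne fun T _ hT hT_empty => ?_
  simp [hT_empty, plog, pS] at hT

theorem sum_mu_powerset_eq_plog (A : Finset Ω) : ∑ S ∈ A.powerset, mu p S = plog p A := by
  simp only [mu_eq_sum_powerset]
  exact sum_powerset_sum_powerset_neg_one_pow_card_sub_mul (plog p) A

theorem mu_empty : mu p ∅ = 0 := by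
  simp [mu_eq_sum_powerset, plog, pS]

theorem mu_singleton (a : Ω) : mu p {a} = p a * Real.log (p a) := by
  rw [mu_eq_sum_powerset, ← insert_empty, sum_powerset_insert (notMem_empty a)]
  simp [plog, pS]

theorem sum_mu_filter_card_lt_two (A : Finset Ω) :
    ∑ S ∈ A.powerset with ¬ 2 ≤ #S, mu p S = ∑ ω ∈ A, p ω * Real.log (p ω) := by
  have hsub : powersetCard 1 A ⊆ A.powerset.filter (¬ 2 ≤ #·) := fun S hS => by
    rw [mem_powersetCard] at hS
    simp [hS.1, hS.2]
  rw [← sum_subset hsub fun S hS hS1 => ?_, powersetCard_one, sum_map]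
  · exact sum_congr rfl fun a _ => mu_singleton p a
  · simp only [mem_filter, mem_powerset, mem_powersetCard, not_le, not_and] at hS hS1
    rw [card_eq_zero.mp (by have := hS1 hS.1; omega : #S = 0), mu_empty]

end

theorem sum_mu_powerset_general {Ω : Type*} [DecidableEq Ω] (p : Ω → ℝ)
    (A : Finset Ω) :
    ∑ S ∈ A.powerset.filter (fun S => 2 ≤ S.card), mu p S
      = pS p A * Real.log (pS p A) - ∑ ω ∈ A, p ω * Real.log (p ω) := by
  rw [eq_sub_iff_add_eq, ← sum_mu_filter_card_lt_two p A]
  exact (sum_filter_add_sum_filter_not _ _ _).trans (sum_mu_powerset_eq_plog p A)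

theorem sum_mu_powerset {Ω : Type*} [Fintype Ω] [DecidableEq Ω] (p : Ω → ℝ)
    (hp : ∀ ω, 0 ≤ p ω) (hsum : ∑ ω, p ω = 1) (A : Finset Ω) :
    ∑ S ∈ A.powerset.filter (fun S => 2 ≤ S.card), mu p S
      = pS p A * Real.log (pS p A) - ∑ ω ∈ A, p ω * Real.log (p ω) :=
  sum_mu_powerset_general p A
end

section
/- Let R be a set of atoms of Ω. If partitions Z₁ and Z₂ satisfy ΔZ₁ ⊆ R and ΔZ₂ ⊆ R, then Δ(Z₁ ∨ Z₂) ⊆ R. Consequently, among all partitions Z with ΔZ ⊆ R there is a unique one whose content is maximal (it refines all others), so the maximal representable subset Rep(R) ⊆ R is well defined. -/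
open Finset BigOperators

variable {Ω : Type*} [Fintype Ω] [DecidableEq Ω]

/-! A partition separates `a` from `b` exactly when the pair `{a, b}` lies in its content, so
`content` is an order embedding of partitions under refinement into finsets of atoms under reverse
inclusion, and it turns meets into unions. Hence the partitions whose content lies in `R` are
closed under meets; the meet of all of them (there are finitely many) has the largest content, and
it is the only one since `content` is injective. -/

namespace Finpartition

variable {α : Type*} [DecidableEq α] {s : Finset α}

lemma part_subset_part_of_le {P Q : Finpartition s} (h : P ≤ Q) (a : α) :
    P.part a ⊆ Q.part a := by
  by_cases ha : a ∈ s
  · obtain ⟨t, ht, hPt⟩ := h (P.part_mem.2 ha)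
    rwa [Q.part_eq_of_mem ht (hPt (P.mem_part ha))]
  · simp [P.part_eq_empty.2 ha]

lemma le_iff_forall_part_subset_part {P Q : Finpartition s} :
    P ≤ Q ↔ ∀ a, P.part a ⊆ Q.part a := by
  refine ⟨part_subset_part_of_le, fun h t ht => ?_⟩
  obtain ⟨a, hat⟩ := P.nonempty_of_mem_parts ht
  have ha : a ∈ s := P.le ht hat
  exact ⟨Q.part a, Q.part_mem.2 ha, P.part_eq_of_mem ht hat ▸ h a⟩

lemma part_inf (P Q : Finpartition s) (a : α) : (P ⊓ Q).part a = P.part a ∩ Q.part a := by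
  by_cases ha : a ∈ s
  · refine (P ⊓ Q).part_eq_of_mem ?_ (mem_inter.2 ⟨P.mem_part ha, Q.mem_part ha⟩)
    rw [parts_inf, mem_erase]
    exact ⟨ne_empty_of_mem (mem_inter.2 ⟨P.mem_part ha, Q.mem_part ha⟩),
      mem_image.2 ⟨(P.part a, Q.part a), mem_product.2 ⟨P.part_mem.2 ha, Q.part_mem.2 ha⟩, rfl⟩⟩
  · rw [(P ⊓ Q).part_eq_empty.2 ha, P.part_eq_empty.2 ha, empty_inter]

end Finpartition

lemma crossed_iff_exists_part_ne {X : Finpartition (univ : Finset Ω)} {S : Finset Ω} :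
    crossed X S ↔ ∃ a ∈ S, ∃ b ∈ S, X.part a ≠ X.part b := by
  constructor
  · rintro ⟨P, hP, Q, hQ, hPQ, ⟨a, ha⟩, ⟨b, hb⟩⟩
    rw [mem_inter] at ha hb
    exact ⟨a, ha.1, b, hb.1, by rwa [X.part_eq_of_mem hP ha.2, X.part_eq_of_mem hQ hb.2]⟩
  · rintro ⟨a, ha, b, hb, hab⟩
    exact ⟨X.part a, X.part_mem.2 (mem_univ a), X.part b, X.part_mem.2 (mem_univ b), hab,
      ⟨a, mem_inter.2 ⟨ha, X.mem_part (mem_univ a)⟩⟩,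
      ⟨b, mem_inter.2 ⟨hb, X.mem_part (mem_univ b)⟩⟩⟩

lemma mem_content {X : Finpartition (univ : Finset Ω)} {S : Finset Ω} :
    S ∈ content X ↔ ∃ a ∈ S, ∃ b ∈ S, X.part a ≠ X.part b := by
  simp only [content, mem_filter, mem_univ, true_and, crossed_iff_exists_part_ne,
    and_iff_right_iff_imp]
  rintro ⟨a, ha, b, hb, hab⟩
  exact one_lt_card.2 ⟨a, ha, b, hb, fun h => hab (h ▸ rfl)⟩

lemma pair_mem_content_iff {X : Finpartition (univ : Finset Ω)} {a b : Ω} :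
    {a, b} ∈ content X ↔ X.part a ≠ X.part b := by
  rw [mem_content]
  constructor
  · rintro ⟨x, hx, y, hy, hxy⟩ hab
    simp only [mem_insert, mem_singleton] at hx hy
    rcases hx with rfl | rfl <;> rcases hy with rfl | rfl <;> simp_all
  · exact fun hab => ⟨a, by simp, b, by simp, hab⟩

lemma content_subset_content_iff {X Z : Finpartition (univ : Finset Ω)} :
    content Z ⊆ content X ↔ X ≤ Z := by
  rw [Finpartition.le_iff_forall_part_subset_part]
  constructor
  · intro h a b hb
    by_contra hbZ
    have hZ : Z.part a ≠ Z.part b := fun hab => hbZ (hab ▸ Z.mem_part (mem_univ b))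
    exact pair_mem_content_iff.1 (h (pair_mem_content_iff.2 hZ))
      (X.part_eq_of_mem (X.part_mem.2 (mem_univ a)) hb).symm
  · intro h S hS
    obtain ⟨a, ha, b, hb, hab⟩ := mem_content.1 hS
    refine mem_content.2 ⟨a, ha, b, hb, fun hX => hab ?_⟩
    exact (Z.part_eq_of_mem (Z.part_mem.2 (mem_univ a)) (h a (hX ▸ X.mem_part (mem_univ b)))).symm

lemma content_inf (Z₁ Z₂ : Finpartition (univ : Finset Ω)) :
    content (Z₁ ⊓ Z₂) = content Z₁ ∪ content Z₂ := by
  refine subset_antisymm (fun S hS => ?_) (union_subset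
    (content_subset_content_iff.2 inf_le_left) (content_subset_content_iff.2 inf_le_right))
  obtain ⟨a, ha, b, hb, hab⟩ := mem_content.1 hS
  rw [Finpartition.part_inf, Finpartition.part_inf] at hab
  by_cases h₁ : Z₁.part a = Z₁.part b
  · rw [h₁] at hab
    exact mem_union_right _ (mem_content.2 ⟨a, ha, b, hb, fun h₂ => hab (h₂ ▸ rfl)⟩)
  · exact mem_union_left _ (mem_content.2 ⟨a, ha, b, hb, h₁⟩)

lemma content_top : content (⊤ : Finpartition (univ : Finset Ω)) = ∅ :=
  eq_empty_of_forall_notMem fun _ hS =>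
    have ⟨a, _, b, _, hab⟩ := mem_content.1 hS
    hab (Finpartition.parts_top_subsingleton _ ((⊤ : Finpartition _).part_mem.2 (mem_univ a))
      ((⊤ : Finpartition _).part_mem.2 (mem_univ b)))

lemma content_finset_inf_subset {R : Finset (Finset Ω)}
    (s : Finset (Finpartition (univ : Finset Ω))) (hs : ∀ W ∈ s, content W ⊆ R) :
    content (s.inf id) ⊆ R :=
  inf_induction (p := fun Z => content Z ⊆ R) (by rw [content_top]; exact empty_subset R)
    (fun Z₁ h₁ Z₂ h₂ => (content_inf Z₁ Z₂).trans_subset (union_subset h₁ h₂)) hs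

theorem rep_well_defined {Ω : Type*} [Fintype Ω] [DecidableEq Ω]
    (R : Finset (Finset Ω)) :
    (∀ Z₁ Z₂ : Finpartition (univ : Finset Ω),
        content Z₁ ⊆ R → content Z₂ ⊆ R → content (Z₁ ⊓ Z₂) ⊆ R) ∧
    (∃! Z : Finpartition (univ : Finset Ω),
        content Z ⊆ R ∧
          ∀ W : Finpartition (univ : Finset Ω), content W ⊆ R → content W ⊆ content Z) := by
  refine ⟨fun Z₁ Z₂ h₁ h₂ => (content_inf Z₁ Z₂).trans_subset (union_subset h₁ h₂), ?_⟩
  let admissible := univ.filter fun W : Finpartition (univ : Finset Ω) => content W ⊆ R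
  have hZR : content (admissible.inf id) ⊆ R :=
    content_finset_inf_subset _ fun W hW => (mem_filter.1 hW).2
  have hZmax (W : Finpartition (univ : Finset Ω)) (hW : content W ⊆ R) :
      content W ⊆ content (admissible.inf id) :=
    content_subset_content_iff.2 (inf_le (mem_filter.2 ⟨mem_univ W, hW⟩))
  refine ⟨admissible.inf id, ⟨hZR, hZmax⟩, fun Z ⟨hZR', hZmax'⟩ => le_antisymm ?_ ?_⟩
  · exact content_subset_content_iff.1 (hZmax' _ hZR)
  · exact content_subset_content_iff.1 (hZmax Z hZR')
end
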